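/- Let β be a totally real cubic Perron number whose Galois conjugates α and γ satisfy −1 < α < 1 < γ < β. Then β^n is not a Parry number for any integer n ≥ 1, i.e. β has Parry order 0. -/

import Mathlib

/-- The β-transformation `x ↦ βx - ⌊βx⌋`. -/
noncomputable def betaT (β : ℝ) (x : ℝ) : ℝ := β * x - ⌊β * x⌋

/-- `β` is a Parry number: `β > 1` and the forward orbit of `1` under the
β-transformation is finite. -/
def IsParry (β : ℝ) : Prop :=
  1 < β ∧ Set.Finite {x : ℝ | ∃ n : ℕ, 1 ≤ n ∧ (betaT β)^[n] 1 = x}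

/-- `β` is a simple Parry number: Parry, and the orbit of `1` hits `0`. -/
def IsSimpleParry (β : ℝ) : Prop :=
  IsParry β ∧ ∃ n : ℕ, 1 ≤ n ∧ (betaT β)^[n] 1 = 0

/-- `β` is a Perron number: a real algebraic integer `β > 1` all of whose Galois
conjugates other than `β` itself have complex absolute value `< β`. -/
def IsPerron (β : ℝ) : Prop :=
  1 < β ∧ IsIntegral ℤ β ∧
    ∀ z : ℂ, Polynomial.aeval z (minpoly ℚ β) = 0 → z ≠ (β : ℂ) → ‖z‖ < β

/-- `β` is a Pisot number. -/
def IsPisot (β : ℝ) : Prop :=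
  1 < β ∧ IsIntegral ℤ β ∧
    ∀ z : ℂ, Polynomial.aeval z (minpoly ℚ β) = 0 → z ≠ (β : ℂ) → ‖z‖ < 1

/-- `β` is a Salem number. -/
def IsSalem (β : ℝ) : Prop :=
  1 < β ∧ IsIntegral ℤ β ∧
    (∀ z : ℂ, Polynomial.aeval z (minpoly ℚ β) = 0 → z ≠ (β : ℂ) → ‖z‖ ≤ 1) ∧
    (∃ z : ℂ, Polynomial.aeval z (minpoly ℚ β) = 0 ∧ ‖z‖ = 1)

/-- `β` has Parry order exactly `n`: if `n ≥ 1` then `β ^ n` is Parry, and no higher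
power of `β` is Parry. -/
def HasParryOrder (β : ℝ) (n : ℕ) : Prop :=
  (1 ≤ n → IsParry (β ^ n)) ∧ ∀ k : ℕ, n < k → ¬ IsParry (β ^ k)

/-- Mahler measure of an algebraic number `β`: product of `max 1 |α|` over the complex
roots `α` of the minimal polynomial of `β` over `ℚ`. -/
noncomputable def mahlerMeasureOf (β : ℝ) : ℝ :=
  (((minpoly ℚ β).map (algebraMap ℚ ℂ)).roots.map (fun z => max 1 (‖z‖))).prod

/-!
If `B` is a Parry number, the orbit `xⱼ = T_B^j(1)` is eventually periodic, and
`xⱼ = Pⱼ(B)` for the rational polynomials `P₀ = 1`, `Pⱼ₊₁ = X Pⱼ - dⱼ` built from the digits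
`dⱼ = ⌊B xⱼ⌋`. A relation `Pₖ(B) = Pₘ(B)` passes to every conjugate `t` of `B`, so `Pⱼ(t)` is
eventually periodic too. On the other hand the digits cancel in `xⱼ₊₁ - Pⱼ₊₁(t)`, which equals
`t (xⱼ - Pⱼ(t)) + (B - t) xⱼ`; hence it is at least `(B - t) tʲ`, and since `xⱼ ≤ 1`,
`Pⱼ(t) → -∞` when `1 < t < B`. So a Parry number has no real conjugate in `(1, B)`; for the
theorem take `B = βⁿ` and `t = γⁿ`, a conjugate of `βⁿ` because
`(minpoly βⁿ)(Xⁿ)` vanishes at `β`.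
-/

open Polynomial Filter

lemma aeval_pow_minpoly_pow {K A B : Type*} [Field K] [Ring A] [Algebra K A]
    [Semiring B] [Algebra K B] {a : A} {b : B} (hb : aeval b (minpoly K a) = 0) (n : ℕ) :
    aeval (b ^ n) (minpoly K (a ^ n)) = 0 := by
  have hdvd : minpoly K a ∣ (minpoly K (a ^ n)).comp (X ^ n) :=
    minpoly.dvd K a (by rw [aeval_comp, map_pow, aeval_X, minpoly.aeval])
  simpa only [aeval_comp, map_pow, aeval_X] using aeval_eq_zero_of_dvd_aeval_eq_zero hdvd hb

section BetaExpansion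

variable {β t : ℝ}

lemma betaT_iterate_succ (β x : ℝ) (j : ℕ) :
    (betaT β)^[j + 1] x = β * (betaT β)^[j] x - ⌊β * (betaT β)^[j] x⌋ :=
  Function.iterate_succ_apply' _ _ _

lemma betaT_iterate_one_mem_Icc (β : ℝ) (j : ℕ) : (betaT β)^[j] 1 ∈ Set.Icc (0 : ℝ) 1 := by
  cases j with
  | zero => simp
  | succ j =>
    rw [betaT_iterate_succ]
    exact ⟨Int.fract_nonneg _, (Int.fract_lt_one _).le⟩

noncomputable def betaDigit (β : ℝ) (j : ℕ) : ℤ := ⌊β * (betaT β)^[j] 1⌋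

noncomputable def betaOrbitPoly (β : ℝ) : ℕ → ℚ[X]
  | 0 => 1
  | j + 1 => X * betaOrbitPoly β j - C (betaDigit β j : ℚ)

lemma aeval_betaOrbitPoly_succ (β t : ℝ) (j : ℕ) :
    aeval t (betaOrbitPoly β (j + 1)) = t * aeval t (betaOrbitPoly β j) - betaDigit β j := by
  simp [betaOrbitPoly]

lemma aeval_betaOrbitPoly_self (β : ℝ) (j : ℕ) :
    aeval β (betaOrbitPoly β j) = (betaT β)^[j] 1 := by
  induction j with
  | zero => simp [betaOrbitPoly]
  | succ j ih => rw [aeval_betaOrbitPoly_succ, ih, betaT_iterate_succ, betaDigit]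

lemma mul_pow_le_sub_aeval_betaOrbitPoly (ht : 0 ≤ t) (htβ : t ≤ β) (j : ℕ) :
    (β - t) * t ^ j ≤ (betaT β)^[j + 1] 1 - aeval t (betaOrbitPoly β (j + 1)) := by
  have hstep : ∀ i, (betaT β)^[i + 1] 1 - aeval t (betaOrbitPoly β (i + 1)) =
      t * ((betaT β)^[i] 1 - aeval t (betaOrbitPoly β i)) + (β - t) * (betaT β)^[i] 1 := by
    intro i
    rw [aeval_betaOrbitPoly_succ, betaT_iterate_succ, betaDigit]
    ring
  induction j with
  | zero => rw [hstep]; simp [betaOrbitPoly]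
  | succ j ih =>
    have hx := (betaT_iterate_one_mem_Icc β (j + 1)).1
    rw [hstep, pow_succ]
    nlinarith [mul_le_mul_of_nonneg_left ih ht, mul_nonneg (sub_nonneg.2 htβ) hx]

lemma tendsto_aeval_betaOrbitPoly_atBot (h1t : 1 < t) (htβ : t < β) :
    Tendsto (fun j => aeval t (betaOrbitPoly β j)) atTop atBot := by
  rw [← tendsto_add_atTop_iff_nat 1]
  have hlim : Tendsto (fun j : ℕ => 1 - (β - t) * t ^ j) atTop atBot :=
    tendsto_atBot_add_const_left _ 1 <| tendsto_neg_atTop_atBot.comp <|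
      (tendsto_pow_atTop_atTop_of_one_lt h1t).const_mul_atTop (sub_pos.2 htβ)
  refine tendsto_atBot_mono (fun j => ?_) hlim
  have := mul_pow_le_sub_aeval_betaOrbitPoly (by linarith) htβ.le j
  linarith [(betaT_iterate_one_mem_Icc β (j + 1)).2]

lemma aeval_betaOrbitPoly_add_eq_of_iterate_eq (hroot : aeval t (minpoly ℚ β) = 0) {k m : ℕ}
    (hkm : (betaT β)^[k] 1 = (betaT β)^[m] 1) (i : ℕ) :
    aeval t (betaOrbitPoly β (i + k)) = aeval t (betaOrbitPoly β (i + m)) := by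
  induction i with
  | zero =>
    have hdvd : minpoly ℚ β ∣ betaOrbitPoly β k - betaOrbitPoly β m :=
      minpoly.dvd ℚ β (by rw [map_sub, aeval_betaOrbitPoly_self, aeval_betaOrbitPoly_self, hkm,
        sub_self])
    simpa [sub_eq_zero] using aeval_eq_zero_of_dvd_aeval_eq_zero hdvd hroot
  | succ i ih =>
    have hdigit : betaDigit β (i + k) = betaDigit β (i + m) := by
      rw [betaDigit, betaDigit, Function.iterate_add_apply, Function.iterate_add_apply, hkm]
    rw [Nat.add_right_comm, aeval_betaOrbitPoly_succ, ih, hdigit, ← aeval_betaOrbitPoly_succ,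
      Nat.add_right_comm]

lemma IsParry.exists_lt_iterate_eq (h : IsParry β) :
    ∃ k m : ℕ, k < m ∧ (betaT β)^[k] 1 = (betaT β)^[m] 1 := by
  have hmaps : Set.MapsTo (fun j : ℕ => (betaT β)^[j + 1] 1) Set.univ
      {x : ℝ | ∃ n : ℕ, 1 ≤ n ∧ (betaT β)^[n] 1 = x} :=
    fun j _ => ⟨j + 1, j.succ_pos, rfl⟩
  obtain ⟨k, -, m, -, hkm, heq⟩ := Set.infinite_univ.exists_lt_map_eq_of_mapsTo hmaps h.2
  exact ⟨k + 1, m + 1, by omega, heq⟩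

lemma IsParry.aeval_minpoly_ne_zero (h : IsParry β) (h1t : 1 < t) (htβ : t < β) :
    aeval t (minpoly ℚ β) ≠ 0 := by
  intro hroot
  obtain ⟨k, m, hkm, hiter⟩ := h.exists_lt_iterate_eq
  set y : ℕ → ℝ := fun j => aeval t (betaOrbitPoly β j)
  have hper : Function.Periodic (fun i => y (i + k)) (m - k) := fun i => by
    dsimp only
    rw [show i + (m - k) + k = i + m by omega]
    exact (aeval_betaOrbitPoly_add_eq_of_iterate_eq hroot hiter i).symm
  have hconst : ∀ n : ℕ, y (n * (m - k) + k) = y k := fun n => by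
    simpa using hper.nat_mul_eq n
  have hindex : Tendsto (fun n : ℕ => n * (m - k) + k) atTop atTop :=
    tendsto_atTop_mono (fun n => le_add_right (Nat.le_mul_of_pos_right n (by omega))) tendsto_id
  have hlim : Tendsto (fun n : ℕ => y (n * (m - k) + k)) atTop atBot :=
    (tendsto_aeval_betaOrbitPoly_atBot h1t htβ).comp hindex
  simp only [hconst] at hlim
  exact not_tendsto_const_atBot _ _ hlim

end BetaExpansion

theorem totally_real_cubic_case_three_general (β : ℝ)
    (γ : ℝ)
    (hγroot : Polynomial.aeval γ (minpoly ℚ β) = 0)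
    (h3 : 1 < γ) (h4 : γ < β) :
    ∀ n : ℕ, 1 ≤ n → ¬ IsParry (β ^ n) := by
  intro n hn hparry
  exact hparry.aeval_minpoly_ne_zero (one_lt_pow₀ h3 (by omega))
    (pow_lt_pow_left₀ h4 (by linarith) (by omega)) (aeval_pow_minpoly_pow hγroot n)

/-- A totally real cubic Perron number whose conjugates satisfy
`-1 < α < 1 < γ < β` has no Parry positive power. -/
theorem totally_real_cubic_case_three (β : ℝ) (hβ : IsPerron β)
    (hdeg : (minpoly ℚ β).natDegree = 3)
    (α γ : ℝ)
    (hαroot : Polynomial.aeval α (minpoly ℚ β) = 0)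
    (hγroot : Polynomial.aeval γ (minpoly ℚ β) = 0)
    (h1 : -1 < α) (h2 : α < 1) (h3 : 1 < γ) (h4 : γ < β) :
    ∀ n : ℕ, 1 ≤ n → ¬ IsParry (β ^ n) :=
  totally_real_cubic_case_three_general β γ hγroot h3 h4
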